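/- arXiv:2007.04425 — 7 statements merged into one kernel-verified Lean document; each statement's English description precedes it below -/
import Mathlib

section
/- Let β, μ, δ > 0, S* = δ/β, let ṽ : (0,1] → ℝ be continuous and increasing, and let (I*, S*) with I* > 0 satisfy μ(1 − S*) − βS*I* = S*ṽ(I*). Define V(I,S) = S − S* ln(S/S*) + I − I* ln(I/I*) + (1/β)∫_{I*}^{I} (ṽ(i) − ṽ(I*))/i di. Then along any solution of I' = βIS − δI, S' = −βIS − ṽ(I)S − μS + μ with I, S > 0, the derivative of V along the flow equals −μ(S − S*)²/(S* S), and in particular is ≤ 0 with equality iff S = S*. -/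
open intervalIntegral

/-!
Along the flow, `I' = β I (S - S*)` because `δ = β S*`, so the two `I`-terms of `V` contribute
`β (I - I*) (S - S*) + (ṽ(I) - ṽ(I*)) (S - S*)`, while the `S`-term contributes
`(S - S*) (μ/S - β I - ṽ(I) - μ)`. In the sum the `I`- and `ṽ(I)`-dependence cancels, and the
equilibrium relation `μ (1 - S*) / S* = β I* + ṽ(I*)` turns what is left into
`μ (S - S*) (1/S - 1/S*)`.
-/

theorem HasDerivAt.sub_mul_log_div {f : ℝ → ℝ} {f' c t : ℝ} (hf : HasDerivAt f f' t)
    (hft : f t ≠ 0) (hc : c ≠ 0) :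
    HasDerivAt (fun τ => f τ - c * Real.log (f τ / c)) (f' * (1 - c / f t)) t := by
  have hlog := (hf.div_const c).log (div_ne_zero hft hc)
  refine (hf.sub (hlog.const_mul c)).congr_deriv ?_
  field_simp

theorem ContinuousOn.comp_min_right {f : ℝ → ℝ} {a b : ℝ} (hf : ContinuousOn f (Set.Ioc a b))
    (hab : a < b) : ContinuousOn (fun x => f (min x b)) (Set.Ioi a) :=
  hf.comp (by fun_prop) fun _ hx => ⟨lt_min hx hab, min_le_right _ _⟩

/-- The integrand is only controlled on `(a, b]`, so the integral need not be differentiable in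
its upper limit at `b`; it is differentiated along `u` after extending `f` by `f b` beyond `b`. -/
theorem HasDerivAt.intervalIntegral_of_continuousOn_Ioc {f u : ℝ → ℝ} {a b c u' t : ℝ}
    (hf : ContinuousOn f (Set.Ioc a b)) (hc : c ∈ Set.Ioc a b)
    (hu_mem : ∀ τ, u τ ∈ Set.Ioc a b) (hu : HasDerivAt u u' t) :
    HasDerivAt (fun τ => ∫ x in c..u τ, f x) (f (u t) * u') t := by
  set g : ℝ → ℝ := fun x => f (min x b)
  have hg : ContinuousOn g (Set.Ioi a) := hf.comp_min_right (hc.1.trans_le hc.2)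
  have hg_eq : Set.EqOn g f (Set.Ioc a b) := fun x hx => by simp [g, min_eq_left hx.2]
  have hint_eq : ∀ x ∈ Set.Ioc a b, ∫ y in c..x, g y = ∫ y in c..x, f y := fun x hx =>
    integral_congr (hg_eq.mono (Set.ordConnected_Ioc.uIcc_subset hc hx))
  have hx := hu_mem t
  have hftc : HasDerivAt (fun x => ∫ y in c..x, g y) (g (u t)) (u t) :=
    integral_hasDerivAt_right
      ((hg.mono (Set.ordConnected_Ioi.uIcc_subset hc.1 hx.1)).intervalIntegrable)
      (hg.stronglyMeasurableAtFilter isOpen_Ioi _ hx.1)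
      (hg.continuousAt (Ioi_mem_nhds hx.1))
  rw [← hg_eq hx]
  exact (hftc.comp t hu).congr_of_eventuallyEq
    (Filter.Eventually.of_forall fun τ => (hint_eq _ (hu_mem τ)).symm)

theorem sir_lyapunov_rate_eq {β μ δ Sstar Istar vI vstar i s : ℝ} (hβ : β ≠ 0) (hSstar : Sstar ≠ 0)
    (hi : i ≠ 0) (hs : s ≠ 0) (hδ : δ = β * Sstar)
    (heq : μ * (1 - Sstar) - β * Sstar * Istar = Sstar * vstar) :
    (-(β * i * s) - vI * s - μ * s + μ) * (1 - Sstar / s)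
        + (β * i * s - δ * i) * (1 - Istar / i)
        + 1 / β * ((vI - vstar) / i * (β * i * s - δ * i))
      = -μ * (s - Sstar) ^ 2 / (Sstar * s) := by
  subst hδ
  field_simp
  linear_combination (s ^ 2 - s * Sstar) * heq

theorem neg_mul_sq_sub_div_nonpos {μ a x y : ℝ} (hμ : 0 < μ) (ha : 0 < a) :
    -μ * (x - y) ^ 2 / a ≤ 0 :=
  div_nonpos_of_nonpos_of_nonneg (mul_nonpos_of_nonpos_of_nonneg (by linarith) (sq_nonneg _))
    ha.le

theorem neg_mul_sq_sub_div_eq_zero_iff {μ a x y : ℝ} (hμ : μ ≠ 0) (ha : a ≠ 0) :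
    -μ * (x - y) ^ 2 / a = 0 ↔ x = y := by
  simp [hμ, ha, sub_eq_zero]

theorem SIR_lyapunov_derivative_general
    (β μ δ : ℝ) (hβ : 0 < β) (hμ : 0 < μ) (hδ : 0 < δ)
    (Sstar : ℝ) (hSstar : Sstar = δ / β)
    (vv : ℝ → ℝ) (hcont : ContinuousOn vv (Set.Ioc 0 1))
    (Istar : ℝ) (hIstar : Istar ∈ Set.Ioc (0:ℝ) 1)
    (heq : μ * (1 - Sstar) - β * Sstar * Istar = Sstar * vv Istar)
    (I S : ℝ → ℝ)
    (hpos : ∀ t, 0 < I t ∧ I t ≤ 1 ∧ 0 < S t)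
    (hI : ∀ t, HasDerivAt I (β * I t * S t - δ * I t) t)
    (hS : ∀ t, HasDerivAt S (-(β * I t * S t) - vv (I t) * S t - μ * S t + μ) t) :
    ∀ t, HasDerivAt
        (fun τ => S τ - Sstar * Real.log (S τ / Sstar)
          + I τ - Istar * Real.log (I τ / Istar)
          + (1/β) * ∫ i in Istar..(I τ), (vv i - vv Istar) / i)
        (-μ * (S t - Sstar)^2 / (Sstar * S t)) t ∧
      -μ * (S t - Sstar)^2 / (Sstar * S t) ≤ 0 ∧
      (-μ * (S t - Sstar)^2 / (Sstar * S t) = 0 ↔ S t = Sstar) := by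
  have hSstar_pos : 0 < Sstar := hSstar ▸ div_pos hδ hβ
  have hδ_eq : δ = β * Sstar := by rw [hSstar]; field_simp
  have hintegrand : ContinuousOn (fun i => (vv i - vv Istar) / i) (Set.Ioc 0 1) :=
    (hcont.sub continuousOn_const).div continuousOn_id fun i hi => hi.1.ne'
  intro t
  obtain ⟨hIt, -, hSt⟩ := hpos t
  have hV := (((hS t).sub_mul_log_div hSt.ne' hSstar_pos.ne').add
      ((hI t).sub_mul_log_div hIt.ne' hIstar.1.ne')).add
    ((HasDerivAt.intervalIntegral_of_continuousOn_Ioc hintegrand hIstar (fun τ => ⟨(hpos τ).1, (hpos τ).2.1⟩) (hI t)).const_mul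
      (1 / β))
  refine ⟨?_, neg_mul_sq_sub_div_nonpos hμ (mul_pos hSstar_pos hSt),
    neg_mul_sq_sub_div_eq_zero_iff hμ.ne' (mul_pos hSstar_pos hSt).ne'⟩
  rw [← sir_lyapunov_rate_eq hβ.ne' hSstar_pos.ne' hIt.ne' hSt.ne' hδ_eq heq]
  exact hV.congr_of_eventuallyEq (Filter.Eventually.of_forall fun τ => by
    simp only [Pi.add_apply]; ring)

/-- The Lyapunov function V(I,S) = S − S* ln(S/S*) + I − I* ln(I/I*)
    + (1/β)∫_{I*}^{I}(vv(i) − vv(I*))/i di decreases along solutions of the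
    SIR system with fixed increasing branch vv: its derivative along the flow
    equals −μ(S − S*)²/(S* S), which is ≤ 0 with equality iff S = S*. -/
theorem SIR_lyapunov_derivative
    (β μ δ : ℝ) (hβ : 0 < β) (hμ : 0 < μ) (hδ : 0 < δ)
    (Sstar : ℝ) (hSstar : Sstar = δ / β)
    (vv : ℝ → ℝ) (hcont : ContinuousOn vv (Set.Ioc 0 1))
    (hmono : MonotoneOn vv (Set.Ioc 0 1))
    (Istar : ℝ) (hIstar : Istar ∈ Set.Ioc (0:ℝ) 1)
    (heq : μ * (1 - Sstar) - β * Sstar * Istar = Sstar * vv Istar)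
    (I S : ℝ → ℝ)
    (hpos : ∀ t, 0 < I t ∧ I t ≤ 1 ∧ 0 < S t)
    (hI : ∀ t, HasDerivAt I (β * I t * S t - δ * I t) t)
    (hS : ∀ t, HasDerivAt S (-(β * I t * S t) - vv (I t) * S t - μ * S t + μ) t) :
    ∀ t, HasDerivAt
        (fun τ => S τ - Sstar * Real.log (S τ / Sstar)
          + I τ - Istar * Real.log (I τ / Istar)
          + (1/β) * ∫ i in Istar..(I τ), (vv i - vv Istar) / i)
        (-μ * (S t - Sstar)^2 / (Sstar * S t)) t ∧
      -μ * (S t - Sstar)^2 / (Sstar * S t) ≤ 0 ∧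
      (-μ * (S t - Sstar)^2 / (Sstar * S t) = 0 ↔ S t = Sstar) :=
  SIR_lyapunov_derivative_general β μ δ hβ hμ hδ Sstar hSstar vv hcont Istar hIstar heq I S hpos hI
    hS
end

section
/- Under the assumptions of the SIR Lyapunov function lemma, suppose additionally that the branch ṽ = v̄ is convex (and increasing). Then every sublevel set {(I,S) : I,S > 0, V(I,S) ≤ c} of the Lyapunov function V(I,S) = S − S* ln(S/S*) + I − I* ln(I/I*) + (1/β)∫_{I*}^{I}(v̄(i) − v̄(I*))/i di is convex. -/
open intervalIntegral Set MeasureTheory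

private lemma myConvexOn_congr {E : Type*} [AddCommMonoid E] [SMul ℝ E] {s : Set E}
    {f g : E → ℝ} (h : ConvexOn ℝ s f) (he : ∀ x ∈ s, f x = g x) : ConvexOn ℝ s g :=
  ⟨h.1, fun x hx y hy a b ha hb hab => by
    rw [← he _ (h.1 hx hy ha hb hab), ← he _ hx, ← he _ hy]
    exact h.2 hx hy ha hb hab⟩

private lemma convexOn_primitive {s : Set ℝ} (hs : Convex ℝ s) {m : ℝ → ℝ}
    (hm : MonotoneOn m s)
    (hi : ∀ a ∈ s, ∀ b ∈ s, IntervalIntegrable m volume a b)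
    {a0 : ℝ} (ha0 : a0 ∈ s) :
    ConvexOn ℝ s (fun x => ∫ t in a0..x, m t) := by
  rw [convexOn_iff_slope_mono_adjacent]
  refine ⟨hs, fun x y z hx hz hxy hyz => ?_⟩
  have hy : y ∈ s := hs.ordConnected.out hx hz ⟨hxy.le, hyz.le⟩
  have hIxy := hi x hx y hy
  have hIyz := hi y hy z hz
  have h1 : (∫ t in a0..y, m t) - ∫ t in a0..x, m t = ∫ t in x..y, m t := by
    rw [← intervalIntegral.integral_add_adjacent_intervals (hi a0 ha0 x hx) hIxy]; ring
  have h2 : (∫ t in a0..z, m t) - ∫ t in a0..y, m t = ∫ t in y..z, m t := by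
    rw [← intervalIntegral.integral_add_adjacent_intervals (hi a0 ha0 y hy) hIyz]; ring
  have hsub1 : Icc x y ⊆ s := hs.ordConnected.out hx hy
  have hsub2 : Icc y z ⊆ s := hs.ordConnected.out hy hz
  have hb1 : (∫ t in x..y, m t) ≤ (y - x) * m y := by
    calc (∫ t in x..y, m t) ≤ ∫ _t in x..y, m y :=
          intervalIntegral.integral_mono_on hxy.le hIxy intervalIntegrable_const
            (fun t ht => hm (hsub1 ht) hy ht.2)
      _ = (y - x) * m y := by simp
  have hb2 : (z - y) * m y ≤ ∫ t in y..z, m t := by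
    calc (z - y) * m y = ∫ _t in y..z, m y := by simp
      _ ≤ _ := intervalIntegral.integral_mono_on hyz.le intervalIntegrable_const hIyz
            (fun t ht => hm hy (hsub2 ht) ht.1)
  have hxy' : 0 < y - x := by linarith
  have hyz' : 0 < z - y := by linarith
  rw [h1, h2]
  have A : (∫ t in x..y, m t) / (y - x) ≤ m y := by
    rw [div_le_iff₀ hxy']; linarith
  have B : m y ≤ (∫ t in y..z, m t) / (z - y) := by
    rw [le_div_iff₀ hyz']; linarith
  linarith

/-- If the ascending branch vbar is convex and increasing, then every sublevel
    set of the Lyapunov function V(I,S) = S − S* ln(S/S*) + I − I* ln(I/I*)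
    + (1/β)∫_{I*}^{I}(vbar(i) − vbar(I*))/i di (on the region 0 < I ≤ 1, 0 < S)
    is convex. -/
theorem SIR_lyapunov_sublevel_convex
    (β μ δ : ℝ) (hβ : 0 < β) (hμ : 0 < μ) (hδ : 0 < δ)
    (Sstar : ℝ) (hSstar : Sstar = δ / β)
    (vbar : ℝ → ℝ)
    (hconv : ConvexOn ℝ (Set.Ioc 0 1) vbar)
    (hmono : MonotoneOn vbar (Set.Ioc 0 1))
    (hcont : ContinuousOn vbar (Set.Ioc 0 1))
    (Istar : ℝ) (hIstar : Istar ∈ Set.Ioc (0:ℝ) 1)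
    (heq : β * Istar + vbar Istar = μ * (1 - Sstar) / Sstar) :
    ∀ c : ℝ, Convex ℝ {p : ℝ × ℝ | 0 < p.1 ∧ p.1 ≤ 1 ∧ 0 < p.2 ∧
      p.2 - Sstar * Real.log (p.2 / Sstar)
        + p.1 - Istar * Real.log (p.1 / Istar)
        + (1/β) * ∫ i in Istar..p.1, (vbar i - vbar Istar) / i ≤ c} := by
  intro c
  have hSs : 0 < Sstar := by rw [hSstar]; positivity
  obtain ⟨hI0, hI1⟩ := hIstar
  set c0 : ℝ := vbar Istar + β * Istar with hc0
  set d : ℝ → ℝ := fun t => 1 + (vbar t - c0) / (β * t) with hd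
  -- monotonicity of the slope function d
  have hdm : MonotoneOn d (Set.Ioc 0 1) := by
    intro x hx y hy hxy
    rcases eq_or_lt_of_le hxy with rfl | hlt
    · exact le_refl _
    have hx0 : 0 < x := hx.1
    have hy0 : 0 < y := hy.1
    simp only [hd]
    have key : (vbar x - c0) * (β * y) ≤ (vbar y - c0) * (β * x) := by
      have key' : (vbar x - c0) * y ≤ (vbar y - c0) * x := by
        by_cases hcase : vbar x ≤ vbar Istar
        · have hvxy : vbar x ≤ vbar y := hmono hx hy hxy
          nlinarith [mul_nonneg hx0.le (sub_nonneg.2 hvxy),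
            mul_nonneg (sub_nonneg.2 hxy) (sub_nonneg.2 hcase),
            mul_nonneg (mul_pos hβ hI0).le (sub_nonneg.2 hxy)]
        · push_neg at hcase
          have hIx : Istar < x := by
            by_contra hle
            push_neg at hle
            exact absurd (hmono hx ⟨hI0, hI1⟩ hle) (not_le.2 hcase)
          have hslope := hconv.slope_mono_adjacent ⟨hI0, hI1⟩ hy hIx hlt
          have hA : (vbar x - vbar Istar) * (y - x) ≤ (vbar y - vbar x) * (x - Istar) := by
            rw [div_le_div_iff₀ (by linarith) (by linarith)] at hslope
            linarith
          have hw : 0 < vbar y - vbar x := by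
            by_contra hw'
            push_neg at hw'
            nlinarith [hA, mul_pos (sub_pos.2 hcase) (sub_pos.2 hlt),
              mul_nonpos_of_nonpos_of_nonneg hw' (sub_pos.2 hIx).le]
          nlinarith [hA, mul_nonneg hI0.le hw.le,
            mul_nonneg (mul_pos hβ hI0).le (sub_pos.2 hlt).le]
      nlinarith [key']
    gcongr ?_ + ?_
    · exact le_refl 1
    · rw [div_le_div_iff₀ (by positivity) (by positivity)]
      exact key
  -- continuity and integrability of d on (0,1]
  have hdc : ContinuousOn d (Set.Ioc 0 1) := by
    apply continuousOn_const.add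
    apply ContinuousOn.div (hcont.sub continuousOn_const)
      ((continuous_const.mul continuous_id).continuousOn)
    intro t ht
    exact ne_of_gt (mul_pos hβ ht.1)
  have hdi : ∀ a ∈ Set.Ioc (0:ℝ) 1, ∀ b ∈ Set.Ioc (0:ℝ) 1,
      IntervalIntegrable d volume a b := by
    intro a ha b hb
    exact ((hdc.mono ((convex_Ioc (0:ℝ) 1).ordConnected.uIcc_subset ha hb)).intervalIntegrable)
  have hG : ConvexOn ℝ (Set.Ioc 0 1) (fun x => ∫ t in Istar..x, d t) :=
    convexOn_primitive (convex_Ioc 0 1) hdm hdi ⟨hI0, hI1⟩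
  -- rewrite g in terms of the primitive of d
  have hgrep : ∀ I ∈ Set.Ioc (0:ℝ) 1,
      Istar + ∫ t in Istar..I, d t
        = I - Istar * Real.log (I / Istar)
          + (1/β) * ∫ i in Istar..I, (vbar i - vbar Istar) / i := by
    intro I hI
    have hsub : uIcc Istar I ⊆ Set.Ioc 0 1 :=
      (convex_Ioc (0:ℝ) 1).ordConnected.uIcc_subset ⟨hI0, hI1⟩ hI
    have h0uIcc : (0:ℝ) ∉ uIcc Istar I := fun h => absurd (hsub h).1 (lt_irrefl 0)
    have hi1 : IntervalIntegrable (fun t => (vbar t - vbar Istar) / t) volume Istar I := by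
      apply ContinuousOn.intervalIntegrable
      apply ContinuousOn.mono _ hsub
      exact (hcont.sub continuousOn_const).div continuousOn_id (fun t ht => ne_of_gt ht.1)
    have hi2 : IntervalIntegrable (fun t => Istar * (1/t)) volume Istar I := by
      apply ContinuousOn.intervalIntegrable
      apply ContinuousOn.mono _ hsub
      exact continuousOn_const.mul (continuousOn_const.div continuousOn_id
        (fun t ht => ne_of_gt ht.1))
    have hdeq : ∀ t, d t = 1 + ((1/β) * ((vbar t - vbar Istar) / t) - Istar * (1/t)) := by
      intro t
      rcases eq_or_ne t 0 with rfl | ht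
      · simp [hd]
      · simp only [hd, hc0]
        field_simp
        ring
    have : (∫ t in Istar..I, d t)
        = ∫ t in Istar..I, (1 + ((1/β) * ((vbar t - vbar Istar) / t) - Istar * (1/t))) := by
      simp_rw [hdeq]
    rw [this]
    rw [intervalIntegral.integral_add intervalIntegrable_const
        ((hi1.const_mul (1/β)).sub hi2)]
    rw [intervalIntegral.integral_sub (hi1.const_mul (1/β)) hi2]
    rw [intervalIntegral.integral_const_mul, intervalIntegral.integral_const_mul]
    rw [integral_one_div h0uIcc]
    have hlog : Real.log (I / Istar) = Real.log I - Real.log Istar :=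
      Real.log_div (ne_of_gt hI.1) (ne_of_gt hI0)
    simp [hlog]
    ring
  -- convexity of g on (0,1]
  have hg : ConvexOn ℝ (Set.Ioc 0 1)
      (fun I => I - Istar * Real.log (I / Istar)
        + (1/β) * ∫ i in Istar..I, (vbar i - vbar Istar) / i) := by
    apply myConvexOn_congr ((convexOn_const Istar (convex_Ioc 0 1)).add hG)
    intro I hI
    exact hgrep I hI
  -- convexity of f on (0,∞)
  have hf : ConvexOn ℝ (Set.Ioi 0)
      (fun S => S - Sstar * Real.log (S / Sstar)) := by
    have base : ConvexOn ℝ (Set.Ioi (0:ℝ))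
        (fun S => (id S + (-(Sstar • Real.log S))) + Sstar * Real.log Sstar) := by
      apply ConvexOn.add
      · exact (convexOn_id (convex_Ioi 0)).add
          (strictConcaveOn_log_Ioi.concaveOn.smul hSs.le).neg
      · exact convexOn_const _ (convex_Ioi 0)
    apply myConvexOn_congr base
    intro S hS
    have : Real.log (S / Sstar) = Real.log S - Real.log Sstar :=
      Real.log_div (ne_of_gt hS) (ne_of_gt hSs)
    simp [this, smul_eq_mul]
    ring
  -- combine on the product domain
  have hD : Convex ℝ ((Set.Ioc (0:ℝ) 1) ×ˢ (Set.Ioi (0:ℝ))) :=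
    (convex_Ioc 0 1).prod (convex_Ioi 0)
  have hΦ : ConvexOn ℝ ((Set.Ioc (0:ℝ) 1) ×ˢ (Set.Ioi (0:ℝ)))
      (fun p : ℝ × ℝ => p.2 - Sstar * Real.log (p.2 / Sstar)
        + p.1 - Istar * Real.log (p.1 / Istar)
        + (1/β) * ∫ i in Istar..p.1, (vbar i - vbar Istar) / i) := by
    refine ⟨hD, fun p hp q hq a b ha hb hab => ?_⟩
    have h1 := hg.2 hp.1 hq.1 ha hb hab
    have h2 := hf.2 hp.2 hq.2 ha hb hab
    simp only [smul_eq_mul, Prod.smul_fst, Prod.smul_snd, Prod.fst_add, Prod.snd_add] at *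
    linarith
  have := hΦ.convex_le c
  convert this using 1
  ext p
  simp only [Set.mem_setOf_eq, Set.mem_prod, Set.mem_Ioc, Set.mem_Ioi]
  tauto
end

section
/- Assume δ < β and βμ ≤ δ(μ + v_nat). Then along any solution in D of I' = βIS − δI, S' = −βIS − v(t)S − μS + μ with v(t) ≥ v_nat, one has S'(t) < 0 whenever S(t) ≥ δ/β. Consequently every trajectory eventually enters and remains in the region {S < δ/β}, where I'(t) < 0, and therefore I(t) → 0. -/
open Filter Topology Set

/-!
While `S ≥ δ / β`, the inflow `μ` of susceptibles is at most their outflow `(μ + v) S`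
(this is `R₀ ≤ 1`), so `S' < 0`; moreover `I' ≥ 0` there, so `S' ≤ -δ I(0)` and `S` cannot stay
above `δ / β`. Once below, `S' < 0` on the level `S = δ / β` keeps it below, and then `I' < 0`.
The limit `I → 0` comes from the Lyapunov function `Φ = β (S + I) + (μ + v_nat) log I`, for which
`Φ' ≤ -β δ I`: if `I` stayed above some `ε > 0`, then `Φ` would decrease linearly, although it is
bounded below by `(μ + v_nat) log ε`.
-/

section DerivativeSign

variable {f f' : ℝ → ℝ} {a : ℝ}

theorem monotoneOn_Ici_of_hasDerivAt_nonneg (hf : ∀ t ≥ a, HasDerivAt f (f' t) t)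
    (hf' : ∀ t ≥ a, 0 ≤ f' t) : MonotoneOn f (Ici a) := by
  refine monotoneOn_of_hasDerivWithinAt_nonneg (f' := f') (convex_Ici a)
    (fun t ht => (hf t ht).continuousAt.continuousWithinAt) (fun t ht => ?_) (fun t ht => ?_)
  all_goals rw [interior_Ici] at ht
  · exact (hf t ht.le).hasDerivWithinAt
  · exact hf' t ht.le

theorem antitoneOn_Ici_of_hasDerivAt_nonpos (hf : ∀ t ≥ a, HasDerivAt f (f' t) t)
    (hf' : ∀ t ≥ a, f' t ≤ 0) : AntitoneOn f (Ici a) := by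
  refine antitoneOn_of_hasDerivWithinAt_nonpos (f' := f') (convex_Ici a)
    (fun t ht => (hf t ht).continuousAt.continuousWithinAt) (fun t ht => ?_) (fun t ht => ?_)
  all_goals rw [interior_Ici] at ht
  · exact (hf t ht.le).hasDerivWithinAt
  · exact hf' t ht.le

theorem exists_nonpos_of_hasDerivAt_le_neg {c : ℝ} (hc : 0 < c)
    (hf : ∀ t ≥ a, HasDerivAt f (f' t) t) (hf' : ∀ t ≥ a, f' t ≤ -c) :
    ∃ t ≥ a, f t ≤ 0 := by
  have hanti : AntitoneOn (fun t => f t + c * t) (Ici a) :=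
    antitoneOn_Ici_of_hasDerivAt_nonpos
      (fun t ht => (hf t ht).add (((hasDerivAt_id t).const_mul c).congr_deriv (mul_one c)))
      (fun t ht => by linarith [hf' t ht])
  have hstep : 0 ≤ max (f a) 0 / c := by positivity
  refine ⟨a + max (f a) 0 / c, le_add_of_nonneg_right hstep, ?_⟩
  have hdecay := hanti self_mem_Ici (le_add_of_nonneg_right hstep) (le_add_of_nonneg_right hstep)
  simp only [mul_add, mul_div_cancel₀ _ hc.ne'] at hdecay
  linarith [le_max_left (f a) 0]

theorem forall_lt_of_hasDerivAt_neg_of_le {b : ℝ} (hf : ∀ t ≥ a, HasDerivAt f (f' t) t)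
    (hf' : ∀ t ≥ a, b ≤ f t → f' t < 0) (ha : f a < b) : ∀ t ≥ a, f t < b := by
  have hle : ∀ t ≥ a, f t ≤ b := fun t ht =>
    image_le_of_deriv_right_lt_deriv_boundary (B := fun _ => b) (B' := 0)
      (fun x hx => (hf x hx.1).continuousAt.continuousWithinAt)
      (fun x hx => (hf x hx.1).hasDerivWithinAt) ha.le (fun _ => hasDerivAt_const _ _)
      (fun x hx hfx => hf' x hx.1 hfx.ge) ⟨ht, le_rfl⟩
  intro t ht
  refine (hle t ht).lt_of_ne fun hft => ?_
  have hat : a < t := ht.lt_of_ne (by rintro rfl; exact ha.ne hft)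
  have hmax : IsLocalMax f t :=
    eventually_of_mem (Ioi_mem_nhds hat) fun s hs => hft ▸ hle s (le_of_lt hs)
  exact (hf' t ht hft.ge).ne (hmax.hasDerivAt_eq_zero (hf t ht))

theorem tendsto_zero_of_antitoneOn_of_frequently_lt (hanti : AntitoneOn f (Ici a))
    (hnonneg : ∀ t ≥ a, 0 ≤ f t) (hsmall : ∀ ε > 0, ∃ᶠ t in atTop, f t < ε) :
    Tendsto f atTop (𝓝 0) := by
  refine tendsto_order.2 ⟨fun b hb => ?_, fun ε hε => ?_⟩
  · filter_upwards [eventually_ge_atTop a] with t ht using hb.trans_le (hnonneg t ht)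
  · obtain ⟨t₀, ht₀, hft₀⟩ := frequently_atTop.1 (hsmall ε hε) a
    filter_upwards [eventually_ge_atTop t₀] with t ht
    exact (hanti (mem_Ici.2 ht₀) (mem_Ici.2 (ht₀.trans ht)) ht).trans_lt hft₀

end DerivativeSign

namespace SIR

structure IsPositiveSolution (β μ δ : ℝ) (v I S : ℝ → ℝ) : Prop where
  I_pos : ∀ t ≥ 0, 0 < I t
  S_pos : ∀ t ≥ 0, 0 < S t
  hasDerivAt_I : ∀ t ≥ 0, HasDerivAt I (β * I t * S t - δ * I t) t
  hasDerivAt_S : ∀ t ≥ 0, HasDerivAt S (-(β * I t * S t) - v t * S t - μ * S t + μ) t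

variable {β μ δ vnat : ℝ}

theorem I_deriv_nonneg_of_div_le {i s : ℝ} (hβ : 0 < β) (hi : 0 ≤ i) (hs : δ / β ≤ s) :
    0 ≤ β * i * s - δ * i := by
  have : δ ≤ β * s := by rwa [div_le_iff₀' hβ] at hs
  nlinarith

theorem I_deriv_neg_of_lt_div {i s : ℝ} (hβ : 0 < β) (hi : 0 < i) (hs : s < δ / β) :
    β * i * s - δ * i < 0 := by
  have : β * s < δ := by rwa [lt_div_iff₀' hβ] at hs
  nlinarith

theorem inflow_le_outflow_of_div_le {w s : ℝ} (hβ : 0 < β) (hμv : 0 ≤ μ + vnat)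
    (hR0 : β * μ ≤ δ * (μ + vnat)) (hw : vnat ≤ w) (hs : 0 ≤ s) (hsδ : δ / β ≤ s) :
    μ ≤ (μ + w) * s := by
  have hδ : δ ≤ β * s := by rwa [div_le_iff₀' hβ] at hsδ
  have hscaled : β * μ ≤ β * ((μ + vnat) * s) := by nlinarith
  nlinarith [le_of_mul_le_mul_left hscaled hβ]

theorem S_deriv_neg_of_div_le {w i s : ℝ} (hβ : 0 < β) (hμv : 0 ≤ μ + vnat)
    (hR0 : β * μ ≤ δ * (μ + vnat)) (hw : vnat ≤ w) (hi : 0 < i) (hs : 0 < s)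
    (hsδ : δ / β ≤ s) : -(β * i * s) - w * s - μ * s + μ < 0 := by
  nlinarith [inflow_le_outflow_of_div_le hβ hμv hR0 hw hs.le hsδ, mul_pos (mul_pos hβ hi) hs]

variable {v I S : ℝ → ℝ}

theorem exists_S_lt_div (h : IsPositiveSolution β μ δ v I S) (hβ : 0 < β) (hδ : 0 < δ)
    (hμv : 0 ≤ μ + vnat) (hR0 : β * μ ≤ δ * (μ + vnat)) (hv : ∀ t, vnat ≤ v t) :
    ∃ T ≥ 0, S T < δ / β := by
  by_contra! hS
  have hI_mono : MonotoneOn I (Ici 0) := monotoneOn_Ici_of_hasDerivAt_nonneg h.hasDerivAt_I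
    fun t ht => I_deriv_nonneg_of_div_le hβ (h.I_pos t ht).le (hS t ht)
  have hI₀ := h.I_pos 0 le_rfl
  obtain ⟨t, ht, hSt⟩ := exists_nonpos_of_hasDerivAt_le_neg (mul_pos hδ hI₀) h.hasDerivAt_S
    fun t ht => by
      have hδS : δ ≤ β * S t := (div_le_iff₀' hβ).1 (hS t ht)
      nlinarith [inflow_le_outflow_of_div_le hβ hμv hR0 (hv t) (h.S_pos t ht).le (hS t ht),
        hI_mono self_mem_Ici ht ht, mul_le_mul_of_nonneg_left hδS (h.I_pos t ht).le]
  exact (h.S_pos t ht).not_ge hSt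

noncomputable def lyapunov (β μ vnat : ℝ) (I S : ℝ → ℝ) (t : ℝ) : ℝ :=
  β * (S t + I t) + (μ + vnat) * Real.log (I t)

theorem hasDerivAt_lyapunov (h : IsPositiveSolution β μ δ v I S) {t : ℝ} (ht : 0 ≤ t) :
    HasDerivAt (lyapunov β μ vnat I S)
      (β * (μ - (μ + v t) * S t - δ * I t) + (μ + vnat) * (β * S t - δ)) t := by
  have hlog := (h.hasDerivAt_I t ht).log (h.I_pos t ht).ne'
  refine ((((h.hasDerivAt_S t ht).add (h.hasDerivAt_I t ht)).const_mul β).add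
    (hlog.const_mul (μ + vnat))).congr_deriv ?_
  field_simp [(h.I_pos t ht).ne']
  ring

theorem lyapunov_deriv_le {w i s : ℝ} (hβ : 0 < β) (hR0 : β * μ ≤ δ * (μ + vnat))
    (hw : vnat ≤ w) (hs : 0 ≤ s) :
    β * (μ - (μ + w) * s - δ * i) + (μ + vnat) * (β * s - δ) ≤ -(β * δ * i) := by
  nlinarith [mul_nonneg (mul_nonneg hβ.le (sub_nonneg.2 hw)) hs]

theorem frequently_I_lt (h : IsPositiveSolution β μ δ v I S) (hβ : 0 < β) (hδ : 0 < δ)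
    (hμv : 0 ≤ μ + vnat) (hR0 : β * μ ≤ δ * (μ + vnat)) (hv : ∀ t, vnat ≤ v t) :
    ∀ ε > 0, ∃ᶠ t in atTop, I t < ε := by
  intro ε hε
  refine frequently_atTop.2 fun T => ?_
  by_contra! hI
  have hI' : ∀ t ≥ max T 0, ε ≤ I t := fun t ht => hI t (le_of_max_le_left ht)
  obtain ⟨t, ht, hΦt⟩ := exists_nonpos_of_hasDerivAt_le_neg (mul_pos (mul_pos hβ hδ) hε)
    (f := fun t => lyapunov β μ vnat I S t - (μ + vnat) * Real.log ε)
    (fun t ht => (hasDerivAt_lyapunov h (le_of_max_le_right ht)).sub_const _)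
    fun t ht => (lyapunov_deriv_le hβ hR0 (hv t) (h.S_pos t (le_of_max_le_right ht)).le).trans
      (neg_le_neg (mul_le_mul_of_nonneg_left (hI' t ht) (mul_pos hβ hδ).le))
  have ht₀ : 0 ≤ t := le_of_max_le_right ht
  have hlog := Real.log_le_log hε (hI' t ht)
  simp only [lyapunov] at hΦt
  nlinarith [h.S_pos t ht₀, h.I_pos t ht₀, mul_le_mul_of_nonneg_left hlog hμv]

end SIR

theorem SIR_infection_free_global_stability_general
    (β μ δ vnat : ℝ) (hβ : 0 < β) (hμ : 0 < μ) (hδ : 0 < δ)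
    (hvnat : 0 ≤ vnat)
    (hR0 : β * μ ≤ δ * (μ + vnat))
    (v : ℝ → ℝ) (hvge : ∀ t, vnat ≤ v t)
    (I S : ℝ → ℝ)
    (hD : ∀ t ≥ (0:ℝ), 0 < I t ∧ 0 < S t ∧ I t + S t ≤ 1)
    (hI : ∀ t ≥ (0:ℝ), HasDerivAt I (β * I t * S t - δ * I t) t)
    (hS : ∀ t ≥ (0:ℝ), HasDerivAt S (-(β * I t * S t) - v t * S t - μ * S t + μ) t) :
    (∀ t ≥ (0:ℝ), S t ≥ δ / β → -(β * I t * S t) - v t * S t - μ * S t + μ < 0) ∧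
    (∃ T ≥ (0:ℝ), ∀ t ≥ T, S t < δ / β ∧ β * I t * S t - δ * I t < 0) ∧
    Tendsto I atTop (𝓝 0) := by
  have h : SIR.IsPositiveSolution β μ δ v I S :=
    ⟨fun t ht => (hD t ht).1, fun t ht => (hD t ht).2.1, hI, hS⟩
  have hμv : 0 ≤ μ + vnat := by positivity
  have hS'_neg : ∀ t ≥ (0:ℝ), S t ≥ δ / β → -(β * I t * S t) - v t * S t - μ * S t + μ < 0 :=
    fun t ht => SIR.S_deriv_neg_of_div_le hβ hμv hR0 (hvge t) (h.I_pos t ht) (h.S_pos t ht)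
  obtain ⟨T, hT, hST⟩ := SIR.exists_S_lt_div h hβ hδ hμv hR0 hvge
  have hS_lt : ∀ t ≥ T, S t < δ / β :=
    forall_lt_of_hasDerivAt_neg_of_le (fun t ht => hS t (hT.trans ht))
      (fun t ht => hS'_neg t (hT.trans ht)) hST
  have hI'_neg : ∀ t ≥ T, β * I t * S t - δ * I t < 0 := fun t ht =>
    SIR.I_deriv_neg_of_lt_div hβ (h.I_pos t (hT.trans ht)) (hS_lt t ht)
  refine ⟨hS'_neg, ⟨T, hT, fun t ht => ⟨hS_lt t ht, hI'_neg t ht⟩⟩, ?_⟩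
  exact tendsto_zero_of_antitoneOn_of_frequently_lt
    (antitoneOn_Ici_of_hasDerivAt_nonpos (fun t ht => hI t (hT.trans ht))
      fun t ht => (hI'_neg t ht).le)
    (fun t ht => (h.I_pos t (hT.trans ht)).le) (SIR.frequently_I_lt h hβ hδ hμv hR0 hvge)

/-- If δ < β and βμ ≤ δ(μ + v_nat) (i.e. R₀ ≤ 1), then along any solution in D,
    S' < 0 whenever S ≥ δ/β; consequently the trajectory eventually enters and
    remains in {S < δ/β}, where I' < 0, and I(t) → 0. -/
theorem SIR_infection_free_global_stability
    (β μ δ vnat : ℝ) (hβ : 0 < β) (hμ : 0 < μ) (hδ : 0 < δ) (hδμ : μ < δ)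
    (hvnat : 0 ≤ vnat)
    (hδβ : δ < β) (hR0 : β * μ ≤ δ * (μ + vnat))
    (v : ℝ → ℝ) (hv : Continuous v) (hvge : ∀ t, vnat ≤ v t)
    (I S : ℝ → ℝ)
    (hD : ∀ t ≥ (0:ℝ), 0 < I t ∧ 0 < S t ∧ I t + S t ≤ 1)
    (hI : ∀ t ≥ (0:ℝ), HasDerivAt I (β * I t * S t - δ * I t) t)
    (hS : ∀ t ≥ (0:ℝ), HasDerivAt S (-(β * I t * S t) - v t * S t - μ * S t + μ) t) :
    (∀ t ≥ (0:ℝ), S t ≥ δ / β → -(β * I t * S t) - v t * S t - μ * S t + μ < 0) ∧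
    (∃ T ≥ (0:ℝ), ∀ t ≥ T, S t < δ / β ∧ β * I t * S t - δ * I t < 0) ∧
    Tendsto I atTop (𝓝 0) :=
  SIR_infection_free_global_stability_general β μ δ vnat hβ hμ hδ hvnat hR0 v hvge I S hD hI hS
end

section
/- Let v̄, v̂ : [I₁, I₂] → ℝ be increasing continuous functions with v̄ ≤ v̂, v̄(I₁) = v̂(I₁), v̄(I₂) = v̂(I₂), and suppose β(Ī* − Î*) + v̄(Ī*) − v̂(Î*) = 0 where Î*, Ī* ∈ (I₁, I₂) satisfy β Ī* + v̄(Ī*) = β Î* + v̂(Î*) = μ(1−S*)/S*. If for each hysteresis loop max_{I₁≤I≤I₂}(v̂(I) − v̄(I)) ≤ L(I₂ − I₁), then Ī* − Î* ≤ (L/β)(I₂ − I₁), and consequently, if L < β, (I₂ − Ī*) + (Î* − I₁) ≥ (1 − L/β)(I₂ − I₁). -/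
/-- Estimate on the positions of the two endemic equilibria Ī* (ascending branch
    vbar) and Î* (descending branch vhat) relative to the turning points I₁ < I₂,
    in terms of the relative loop width L: Ī* − Î* ≤ (L/β)(I₂ − I₁), hence if
    L < β then (I₂ − Ī*) + (Î* − I₁) ≥ (1 − L/β)(I₂ − I₁). -/
theorem equilibria_separation_estimate
    (β L I₁ I₂ Ihat Ibar : ℝ)
    (vbar vhat : ℝ → ℝ)
    (hβ : 0 < β) (hL : 0 ≤ L)
    (hI : I₁ < I₂)
    (hord₁ : I₁ < Ihat) (hord₂ : Ihat < Ibar) (hord₃ : Ibar < I₂)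
    (hmono_bar : MonotoneOn vbar (Set.Icc I₁ I₂))
    (hmono_hat : MonotoneOn vhat (Set.Icc I₁ I₂))
    (hle : ∀ i ∈ Set.Icc I₁ I₂, vbar i ≤ vhat i)
    (hend₁ : vbar I₁ = vhat I₁) (hend₂ : vbar I₂ = vhat I₂)
    (hbal : β * (Ibar - Ihat) + vbar Ibar - vhat Ihat = 0)
    (hwidth : ∀ i ∈ Set.Icc I₁ I₂, vhat i - vbar i ≤ L * (I₂ - I₁)) :
    Ibar - Ihat ≤ (L / β) * (I₂ - I₁) ∧
    (L < β → (I₂ - Ibar) + (Ihat - I₁) ≥ (1 - L / β) * (I₂ - I₁)) := by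
  have hmemhat : Ihat ∈ Set.Icc I₁ I₂ := ⟨le_of_lt hord₁, le_of_lt (hord₂.trans hord₃)⟩
  have hmembar : Ibar ∈ Set.Icc I₁ I₂ := ⟨le_of_lt (hord₁.trans hord₂), le_of_lt hord₃⟩
  have hmb : vbar Ihat ≤ vbar Ibar := hmono_bar hmemhat hmembar (le_of_lt hord₂)
  have hw := hwidth Ihat hmemhat
  have key : β * (Ibar - Ihat) ≤ L * (I₂ - I₁) := by linarith
  have h1 : Ibar - Ihat ≤ (L / β) * (I₂ - I₁) := by
    rw [div_mul_eq_mul_div, le_div_iff₀ hβ]; linarith [key]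
  exact ⟨h1, fun _ => by linarith⟩
end

section
/- Using the Lyapunov function V̄ and V̂ defined by V_ṽ(I,S) = S − S* ln(S/S*) + I − I*_ṽ ln(I/I*_ṽ) + (1/β)∫_{I*_ṽ}^{I}(ṽ(i) − ṽ(I*_ṽ))/i di for ṽ = v̄ (ascending) and ṽ = v̂ (descending), with equilibria Ī*, Î* satisfying β(Ī* − Î*) + v̄(Ī*) − v̂(Î*) = 0, the following identity holds: V̄(I₁,S*) − V̄(I₂,S*) + V̂(I₂,S*) − V̂(I₁,S*) = (1/β)∫_{I₁}^{I₂} (v̂(i) − v̄(i))/i di. -/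
open intervalIntegral

/-- Exact cancellation identity for the two Lyapunov functions (ascending branch
    vbar with equilibrium Ī*, descending branch vhat with equilibrium Î*)
    evaluated at the turning points (I₁,S*), (I₂,S*):
    V̄(I₁,S*) − V̄(I₂,S*) + V̂(I₂,S*) − V̂(I₁,S*) = (1/β)∫_{I₁}^{I₂}(vhat − vbar)/i di. -/
theorem lyapunov_increment_identity
    (β Sstar I₁ I₂ Ihat Ibar : ℝ)
    (vbar vhat : ℝ → ℝ)
    (hβ : 0 < β) (hSstar : 0 < Sstar)
    (hI₁ : 0 < I₁) (hI : I₁ < I₂)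
    (hIbar : Ibar ∈ Set.Icc I₁ I₂) (hIhat : Ihat ∈ Set.Icc I₁ I₂)
    (hcont_bar : ContinuousOn vbar (Set.Icc I₁ I₂))
    (hcont_hat : ContinuousOn vhat (Set.Icc I₁ I₂))
    (hbal : β * (Ibar - Ihat) + vbar Ibar - vhat Ihat = 0) :
    ((Sstar - Sstar * Real.log (Sstar / Sstar) + I₁ - Ibar * Real.log (I₁ / Ibar)
        + (1/β) * ∫ i in Ibar..I₁, (vbar i - vbar Ibar) / i)
      - (Sstar - Sstar * Real.log (Sstar / Sstar) + I₂ - Ibar * Real.log (I₂ / Ibar)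
        + (1/β) * ∫ i in Ibar..I₂, (vbar i - vbar Ibar) / i))
    + ((Sstar - Sstar * Real.log (Sstar / Sstar) + I₂ - Ihat * Real.log (I₂ / Ihat)
        + (1/β) * ∫ i in Ihat..I₂, (vhat i - vhat Ihat) / i)
      - (Sstar - Sstar * Real.log (Sstar / Sstar) + I₁ - Ihat * Real.log (I₁ / Ihat)
        + (1/β) * ∫ i in Ihat..I₁, (vhat i - vhat Ihat) / i))
    = (1/β) * ∫ i in I₁..I₂, (vhat i - vbar i) / i := by

  have hIle := hI.le
  have hpos : ∀ x ∈ Set.Icc I₁ I₂, (0:ℝ) < x := fun x hx => lt_of_lt_of_le hI₁ hx.1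
  have hIbarpos : 0 < Ibar := hpos _ hIbar
  have hIhatpos : 0 < Ihat := hpos _ hIhat
  have hI₂ : 0 < I₂ := hI₁.trans hI
  have hmemI₁ : I₁ ∈ Set.Icc I₁ I₂ := ⟨le_refl _, hIle⟩
  have hmemI₂ : I₂ ∈ Set.Icc I₁ I₂ := ⟨hIle, le_refl _⟩
  -- integrability helper
  have hint : ∀ (f : ℝ → ℝ), ContinuousOn f (Set.Icc I₁ I₂) →
      ∀ a b, a ∈ Set.Icc I₁ I₂ → b ∈ Set.Icc I₁ I₂ →
      IntervalIntegrable (fun i => f i / i) MeasureTheory.volume a b := by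
    intro f hf a b ha hb
    have hsub : Set.uIcc a b ⊆ Set.Icc I₁ I₂ := by
      rw [← Set.uIcc_of_le hIle]
      exact Set.uIcc_subset_uIcc (by rwa [Set.uIcc_of_le hIle]) (by rwa [Set.uIcc_of_le hIle])
    apply ContinuousOn.intervalIntegrable
    exact ContinuousOn.div (hf.mono hsub) (continuousOn_id.mono hsub)
      (fun x hx => (hpos x (hsub hx)).ne')
  have hcb : ContinuousOn (fun i => vbar i - vbar Ibar) (Set.Icc I₁ I₂) :=
    hcont_bar.sub continuousOn_const
  have hch : ContinuousOn (fun i => vhat i - vhat Ihat) (Set.Icc I₁ I₂) :=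
    hcont_hat.sub continuousOn_const
  -- adjacent intervals
  have h1 : (∫ i in Ibar..I₁, (vbar i - vbar Ibar) / i)
      + (∫ i in I₁..I₂, (vbar i - vbar Ibar) / i)
      = ∫ i in Ibar..I₂, (vbar i - vbar Ibar) / i :=
    integral_add_adjacent_intervals (hint _ hcb _ _ hIbar hmemI₁) (hint _ hcb _ _ hmemI₁ hmemI₂)
  have h2 : (∫ i in Ihat..I₁, (vhat i - vhat Ihat) / i)
      + (∫ i in I₁..I₂, (vhat i - vhat Ihat) / i)
      = ∫ i in Ihat..I₂, (vhat i - vhat Ihat) / i :=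
    integral_add_adjacent_intervals (hint _ hch _ _ hIhat hmemI₁) (hint _ hch _ _ hmemI₁ hmemI₂)
  -- split the middle integrals
  have hne : (0:ℝ) ∉ Set.uIcc I₁ I₂ := by
    rw [Set.uIcc_of_le hIle]
    intro hx
    exact absurd (hpos 0 hx) (lt_irrefl 0)
  have hlog : (∫ i in I₁..I₂, (1:ℝ) / i) = Real.log (I₂ / I₁) := integral_one_div hne
  have hsplit : ∀ (f : ℝ → ℝ) (c : ℝ), ContinuousOn f (Set.Icc I₁ I₂) →
      (∫ i in I₁..I₂, (f i - c) / i)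
      = (∫ i in I₁..I₂, f i / i) - c * Real.log (I₂ / I₁) := by
    intro f c hf
    have heq : ∀ i : ℝ, (f i - c) / i = f i / i - c * (1 / i) := by
      intro i; rw [sub_div, mul_one_div]
    simp only [heq]
    rw [intervalIntegral.integral_sub (hint _ hf _ _ hmemI₁ hmemI₂)
        (((hint (fun _ => (1:ℝ)) continuousOn_const _ _ hmemI₁ hmemI₂)).const_mul c),
      intervalIntegral.integral_const_mul, hlog]
  have h3 := hsplit vbar (vbar Ibar) hcont_bar
  have h4 := hsplit vhat (vhat Ihat) hcont_hat
  -- split the RHS integral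
  have h5 : (∫ i in I₁..I₂, (vhat i - vbar i) / i)
      = (∫ i in I₁..I₂, vhat i / i) - ∫ i in I₁..I₂, vbar i / i := by
    simp only [sub_div]
    exact intervalIntegral.integral_sub (hint _ hcont_hat _ _ hmemI₁ hmemI₂)
      (hint _ hcont_bar _ _ hmemI₁ hmemI₂)
  -- rewrite the logs
  have hlog1 : Real.log (I₁ / Ibar) = Real.log I₁ - Real.log Ibar :=
    Real.log_div hI₁.ne' hIbarpos.ne'
  have hlog2 : Real.log (I₂ / Ibar) = Real.log I₂ - Real.log Ibar :=
    Real.log_div hI₂.ne' hIbarpos.ne'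
  have hlog3 : Real.log (I₂ / Ihat) = Real.log I₂ - Real.log Ihat :=
    Real.log_div hI₂.ne' hIhatpos.ne'
  have hlog4 : Real.log (I₁ / Ihat) = Real.log I₁ - Real.log Ihat :=
    Real.log_div hI₁.ne' hIhatpos.ne'
  have hlog5 : Real.log (I₂ / I₁) = Real.log I₂ - Real.log I₁ :=
    Real.log_div hI₂.ne' hI₁.ne'
  have hbal' : (1/β) * (vbar Ibar - vhat Ihat) = -(Ibar - Ihat) := by
    field_simp
    linarith
  rw [← h1, ← h2, h3, h4, h5, hlog1, hlog2, hlog3, hlog4, hlog5]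
  linear_combination (Real.log I₂ - Real.log I₁) * hbal'
end

section
/- Let 0 < S_m < S* and 0 < I₁ < Î*, and suppose S* − S_m + S* ln(S_m/S*) = Î* − I₁ + Î* ln(I₁/Î*) − (1/β)∫_{Î*}^{I₁}(v̂(i) − v̂(Î*))/i di where v̂ is increasing. Then (S* − S_m)²/S_m ≥ (Î* − I₁)²/(I₁ + Î*), and hence S* − S_m ≥ (Î* − I₁)√(S_m/(I₁ + Î*)). -/
/-! Bound both sides of the level-line identity. Since `log (1 + x) ≥ x / (1 + x)`, the
`S`-side is at least `-(S* - S_m)² / S_m`; since `log (1 + x) ≤ 2x / (2 + x)` for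
`-1 < x ≤ 0`, the logarithmic part of the `I`-side is at most `-(Î* - I₁)² / (I₁ + Î*)`, and
the integral term only lowers it further because `v̂ ≤ v̂ Î*` on `[I₁, Î*]`. -/

open Real Set intervalIntegral

namespace Real

theorem monotoneOn_log_sub_two_mul_sub_one_div_add_one :
    MonotoneOn (fun x => log x - 2 * (x - 1) / (x + 1)) (Ioi 0) := by
  have hderiv : ∀ x ∈ Ioi (0 : ℝ), HasDerivAt (fun x => log x - 2 * (x - 1) / (x + 1))
      ((x - 1) ^ 2 / (x * (x + 1) ^ 2)) x := by
    intro x (hx : 0 < x)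
    have hquot : HasDerivAt (fun y => 2 * (y - 1) / (y + 1))
        ((2 * 1 * (x + 1) - 2 * (x - 1) * 1) / (x + 1) ^ 2) x :=
      (((hasDerivAt_id x).sub_const 1).const_mul 2).div ((hasDerivAt_id x).add_const 1)
        (by positivity)
    refine ((hasDerivAt_log hx.ne').fun_sub hquot).congr_deriv ?_
    field_simp
    ring
  refine monotoneOn_of_hasDerivWithinAt_nonneg (f' := fun x => (x - 1) ^ 2 / (x * (x + 1) ^ 2))
    (convex_Ioi 0) (fun x hx => (hderiv x hx).continuousAt.continuousWithinAt) (fun x hx => ?_) (fun x hx => ?_)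
  · rw [interior_Ioi] at hx ⊢
    exact (hderiv x hx).hasDerivWithinAt
  · rw [interior_Ioi, mem_Ioi] at hx
    positivity

theorem log_le_two_mul_sub_one_div_add_one {t : ℝ} (ht : 0 < t) (ht1 : t ≤ 1) :
    log t ≤ 2 * (t - 1) / (t + 1) := by
  simpa using monotoneOn_log_sub_two_mul_sub_one_div_add_one ht (zero_lt_one' ℝ) ht1

end Real

theorem neg_sq_div_le_sub_add_mul_log_div {a b : ℝ} (ha : 0 < a) (hb : 0 < b) :
    -((a - b) ^ 2 / b) ≤ a - b + a * log (b / a) := by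
  have hlog : 1 - a / b ≤ log (b / a) := by
    simpa only [inv_div] using one_sub_inv_le_log_of_pos (div_pos hb ha)
  calc -((a - b) ^ 2 / b) = a - b + a * (1 - a / b) := by field_simp; ring
    _ ≤ a - b + a * log (b / a) := by gcongr

theorem sub_add_mul_log_div_le_neg_sq_div {a b : ℝ} (hb : 0 < b) (hba : b ≤ a) :
    a - b + a * log (b / a) ≤ -((a - b) ^ 2 / (b + a)) := by
  have ha : 0 < a := hb.trans_le hba
  have hlog := log_le_two_mul_sub_one_div_add_one (div_pos hb ha) ((div_le_one ha).2 hba)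
  calc a - b + a * log (b / a) ≤ a - b + a * (2 * (b / a - 1) / (b / a + 1)) := by gcongr
    _ = -((a - b) ^ 2 / (b + a)) := by field_simp; ring

theorem integral_sub_div_nonneg_of_monotoneOn {v : ℝ → ℝ} {a c : ℝ} (ha : 0 ≤ a) (hac : a ≤ c)
    (hv : MonotoneOn v (Icc a c)) : 0 ≤ ∫ i in c..a, (v i - v c) / i := by
  have hneg : 0 ≤ ∫ i in a..c, -((v i - v c) / i) := by
    refine integral_nonneg hac fun u hu => neg_nonneg.2 (div_nonpos_of_nonpos_of_nonneg ?_ ?_)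
    · exact sub_nonpos.2 (hv hu ⟨hac, le_rfl⟩ hu.2)
    · exact ha.trans hu.1
  rw [integral_neg] at hneg
  rw [integral_symm]
  exact hneg

theorem mul_sqrt_div_le_of_sq_div_le {a b c d : ℝ} (ha : 0 ≤ a) (hb : 0 < b)
    (h : c ^ 2 / d ≤ a ^ 2 / b) : c * √(b / d) ≤ a := by
  have hsq : c ^ 2 * (b / d) ≤ a ^ 2 :=
    calc c ^ 2 * (b / d) = c ^ 2 / d * b := by ring
      _ ≤ a ^ 2 / b * b := by gcongr
      _ = a ^ 2 := div_mul_cancel₀ _ hb.ne'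
  calc c * √(b / d) ≤ |c| * √(b / d) := by gcongr; exact le_abs_self c
    _ = √(c ^ 2 * (b / d)) := by rw [sqrt_mul (sq_nonneg c), sqrt_sq_eq_abs]
    _ ≤ √(a ^ 2) := sqrt_le_sqrt hsq
    _ = a := sqrt_sq ha

/-- Geometric estimate relating the vertical extent S* − S_m of a Lyapunov level
    line to the horizontal distance Î* − I₁:
    (S* − S_m)²/S_m ≥ (Î* − I₁)²/(I₁ + Î*), hence
    S* − S_m ≥ (Î* − I₁)√(S_m/(I₁ + Î*)). -/
theorem level_line_estimate_lower
    (β Sstar Sm I₁ Ihat : ℝ)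
    (vhat : ℝ → ℝ)
    (hβ : 0 < β)
    (hSm : 0 < Sm) (hSmS : Sm < Sstar)
    (hI₁ : 0 < I₁) (hIord : I₁ < Ihat)
    (hmono : MonotoneOn vhat (Set.Icc I₁ Ihat))
    (heq : Sstar - Sm + Sstar * Real.log (Sm / Sstar)
      = Ihat - I₁ + Ihat * Real.log (I₁ / Ihat)
        - (1/β) * ∫ i in Ihat..I₁, (vhat i - vhat Ihat) / i) :
    (Sstar - Sm)^2 / Sm ≥ (Ihat - I₁)^2 / (I₁ + Ihat) ∧
    Sstar - Sm ≥ (Ihat - I₁) * Real.sqrt (Sm / (I₁ + Ihat)) := by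
  have hS := neg_sq_div_le_sub_add_mul_log_div (hSm.trans hSmS) hSm
  have hI := sub_add_mul_log_div_le_neg_sq_div hI₁ hIord.le
  have hintegral : 0 ≤ (1 / β) * ∫ i in Ihat..I₁, (vhat i - vhat Ihat) / i :=
    mul_nonneg (one_div_nonneg.2 hβ.le)
      (integral_sub_div_nonneg_of_monotoneOn hI₁.le hIord.le hmono)
  have hsq : (Ihat - I₁) ^ 2 / (I₁ + Ihat) ≤ (Sstar - Sm) ^ 2 / Sm := by linarith
  exact ⟨hsq, mul_sqrt_div_le_of_sq_div_le (by linarith) hSm hsq⟩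
end

section
/- Let S_M > S* > 0 and I₂ > Ī* > 0, and suppose S_M − S* − S* ln(S_M/S*) = I₂ − Ī* − Ī* ln(I₂/Ī*) + (1/β)∫_{Ī*}^{I₂}(v̄(i) − v̄(Ī*))/i di with v̄ increasing. Then (S_M − S*)²/S_M ≥ (I₂ − Ī*)²/(2I₂), and hence S_M − S* ≥ √(S_M/(2I₂)) (I₂ − Ī*). -/
/-! The function `a ↦ b - a - a log (b / a)` is squeezed between `(b - a)² / (2b)` and
`(b - a)² / b`: the upper bound is `log x ≤ x - 1` at `x = a / b`, the lower one is
`log t ≤ sinh (log t) = (t - t⁻¹) / 2` at `t = b / a`. Since the integral term is nonnegative,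
the level-line identity gives `(I₂ - Ī*)² / (2 I₂) ≤ (S_M - S*)² / S_M`, and taking square roots
gives the second estimate. -/

open Real Set intervalIntegral

theorem sub_sub_mul_log_div_le {a b : ℝ} (ha : 0 < a) (hb : 0 < b) :
    b - a - a * log (b / a) ≤ (b - a) ^ 2 / b := by
  have hlog : 1 - a / b ≤ log (b / a) := by
    have := log_le_sub_one_of_pos (div_pos ha hb)
    rw [← inv_div, log_inv, inv_div] at this
    linarith
  have expand : b - a - a * (1 - a / b) = (b - a) ^ 2 / b := by
    field_simp
  linarith [mul_le_mul_of_nonneg_left hlog ha.le]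

theorem log_le_sub_inv_div_two {t : ℝ} (ht : 1 ≤ t) : log t ≤ (t - t⁻¹) / 2 := by
  rw [← sinh_log (by linarith)]
  exact self_le_sinh_iff.mpr (log_nonneg ht)

theorem sq_div_two_mul_le_sub_sub_mul_log_div {a b : ℝ} (ha : 0 < a) (hab : a ≤ b) :
    (b - a) ^ 2 / (2 * b) ≤ b - a - a * log (b / a) := by
  have hb : 0 < b := ha.trans_le hab
  have hlog := log_le_sub_inv_div_two ((one_le_div ha).mpr hab)
  have expand : b - a - a * ((b / a - (b / a)⁻¹) / 2) = (b - a) ^ 2 / (2 * b) := by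
    field_simp
    ring
  linarith [mul_le_mul_of_nonneg_left hlog ha.le]

theorem integral_sub_div_nonneg_of_monotoneOn_s16 {f : ℝ → ℝ} {a b : ℝ} (ha : 0 < a) (hab : a ≤ b)
    (hf : MonotoneOn f (Icc a b)) : 0 ≤ ∫ x in a..b, (f x - f a) / x :=
  integral_nonneg hab fun _ hx ↦
    div_nonneg (sub_nonneg.mpr (hf (left_mem_Icc.mpr hab) hx hx.1)) (ha.trans_le hx.1).le

theorem sqrt_div_mul_le_of_sq_div_le {p q c d : ℝ} (hp : 0 < p) (hd : 0 ≤ d)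
    (h : c ^ 2 / q ≤ d ^ 2 / p) : √(p / q) * c ≤ d := by
  have hsq : p / q * c ^ 2 ≤ d ^ 2 := by
    rw [le_div_iff₀ hp] at h
    calc p / q * c ^ 2 = c ^ 2 / q * p := by ring
      _ ≤ d ^ 2 := h
  calc √(p / q) * c ≤ |√(p / q) * c| := le_abs_self _
    _ = √(p / q * c ^ 2) := by rw [sqrt_mul' _ (sq_nonneg c), sqrt_sq_eq_abs, abs_mul,
          abs_of_nonneg (sqrt_nonneg _)]
    _ ≤ √(d ^ 2) := sqrt_le_sqrt hsq
    _ = d := sqrt_sq hd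

/-- Estimate relating the height S_M of the Lyapunov level line through its top
    point (Ī*, S_M) to the horizontal distance I₂ − Ī*:
    (S_M − S*)²/S_M ≥ (I₂ − Ī*)²/(2I₂), hence S_M − S* ≥ √(S_M/(2I₂))(I₂ − Ī*). -/
theorem level_line_estimate_upper
    (β Sstar SM I₂ Ibar : ℝ)
    (vbar : ℝ → ℝ)
    (hβ : 0 < β)
    (hSstar : 0 < Sstar) (hSM : Sstar < SM)
    (hIbar : 0 < Ibar) (hIord : Ibar < I₂)
    (hmono : MonotoneOn vbar (Set.Icc Ibar I₂))
    (heq : SM - Sstar - Sstar * Real.log (SM / Sstar)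
      = I₂ - Ibar - Ibar * Real.log (I₂ / Ibar)
        + (1/β) * ∫ i in Ibar..I₂, (vbar i - vbar Ibar) / i) :
    (SM - Sstar)^2 / SM ≥ (I₂ - Ibar)^2 / (2 * I₂) ∧
    SM - Sstar ≥ Real.sqrt (SM / (2 * I₂)) * (I₂ - Ibar) := by
  have hSM0 : 0 < SM := hSstar.trans hSM
  have hS := sub_sub_mul_log_div_le hSstar hSM0
  have hI := sq_div_two_mul_le_sub_sub_mul_log_div hIbar hIord.le
  have hint : 0 ≤ (1 / β) * ∫ i in Ibar..I₂, (vbar i - vbar Ibar) / i :=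
    mul_nonneg (one_div_nonneg.mpr hβ.le)
      (integral_sub_div_nonneg_of_monotoneOn_s16 hIbar hIord.le hmono)
  have hmain : (I₂ - Ibar) ^ 2 / (2 * I₂) ≤ (SM - Sstar) ^ 2 / SM := by linarith
  exact ⟨hmain, sqrt_div_mul_le_of_sq_div_le hSM0 (sub_nonneg.mpr hSM.le) hmain⟩
end
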